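/- (Suzuki induction step, from the proof of Theorem 4.2, in a Banach algebra.) Let A be a complete normed unital algebra over ℝ or ℂ, a ∈ A, and m ≥ 1, ℓ ≥ 1 integers, r = 2ℓ+1. Let s = 1/((r−1) − (r−1)^{1/(2m+1)}) and s̃ = 1 − (r−1)·s. Let f : ℝ → A be (2m+1)-times continuously differentiable with f(0) = 1, and suppose the derivatives of μ ↦ f(μ) − exp(μ·a) at μ = 0 vanish for every order j = 0, 1, …, 2m. Define g : ℝ → A by g(μ) = f(s·μ)^ℓ · f(s̃·μ) · f(s·μ)^ℓ. Then the derivatives of μ ↦ g(μ) − exp(μ·a) at μ = 0 vanish for every order j = 0, 1, …, 2m+1. -/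

import Mathlib

/-!
Let `n = 2m+1` and `D` the `n`-th derivative of `f - exp (· • a)` at `0`. If `u - v` and `u' - v'`
vanish to order `n - 1` at `0` and `v 0 = v' 0 = 1`, the Leibniz rule shows that `u u' - v v'`
does too, and that its `n`-th derivative is the sum of theirs; rescaling `μ ↦ cμ` multiplies the
`n`-th derivative by `c ^ n`. So the Suzuki composition of `f` agrees with that of `exp (· • a)`,
which is `exp (· • a)` itself because `2ℓs + s̃ = 1`, up to order `n - 1`, and at order `n` they
differ by `(2ℓ s ^ n + s̃ ^ n) • D`. The coefficient vanishes by the choice of `s = s_m`.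
-/

/-- The Suzuki coefficient `s_m = 1 / ((r-1) - (r-1)^(1/(2m+1)))`. -/
noncomputable def suzukiS (r m : ℕ) : ℝ :=
  1 / (((r : ℝ) - 1) - ((r : ℝ) - 1) ^ ((1 : ℝ) / (2 * (m : ℝ) + 1)))

open NormedSpace

section Jets

variable {𝕜 A : Type*} [NontriviallyNormedField 𝕜] [NormedRing A] [NormedAlgebra 𝕜 A]
  {n : ℕ} {x : 𝕜}

theorem iteratedDeriv_mul_of_vanishing_left {w φ : 𝕜 → A} (hw : ContDiffAt 𝕜 n w x)
    (hφ : ContDiffAt 𝕜 n φ x) (hvan : ∀ i < n, iteratedDeriv i w x = 0) :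
    iteratedDeriv n (w * φ) x = iteratedDeriv n w x * φ x := by
  rw [iteratedDeriv_mul hw hφ, Finset.sum_range_succ, Finset.sum_eq_zero fun i hi => ?_]
  · simp
  · simp [hvan i (Finset.mem_range.1 hi)]

theorem iteratedDeriv_mul_of_vanishing_right {w φ : 𝕜 → A} (hw : ContDiffAt 𝕜 n w x)
    (hφ : ContDiffAt 𝕜 n φ x) (hvan : ∀ i < n, iteratedDeriv i w x = 0) :
    iteratedDeriv n (φ * w) x = φ x * iteratedDeriv n w x := by
  rw [iteratedDeriv_mul hφ hw, Finset.sum_range_succ', Finset.sum_eq_zero fun i hi => ?_]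
  · simp
  · rw [hvan (n - (i + 1)) (by have := Finset.mem_range.1 hi; omega), mul_zero]

theorem iteratedDeriv_mul_sub_mul {u v u' v' : 𝕜 → A} (hu : ContDiffAt 𝕜 n u x)
    (hv : ContDiffAt 𝕜 n v x) (hu' : ContDiffAt 𝕜 n u' x) (hv' : ContDiffAt 𝕜 n v' x)
    (h : ∀ i < n, iteratedDeriv i (u - v) x = 0) (h' : ∀ i < n, iteratedDeriv i (u' - v') x = 0) :
    iteratedDeriv n (u * u' - v * v') x =
      iteratedDeriv n (u - v) x * u' x + v x * iteratedDeriv n (u' - v') x := by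
  rw [show u * u' - v * v' = (u - v) * u' + v * (u' - v') by noncomm_ring,
    iteratedDeriv_add (f := (u - v) * u') (g := v * (u' - v')) ((hu.sub hv).mul hu')
      (hv.mul (hu'.sub hv')),
    iteratedDeriv_mul_of_vanishing_left (w := u - v) (hu.sub hv) hu' h,
    iteratedDeriv_mul_of_vanishing_right (w := u' - v') (hu'.sub hv') hv h']

structure HasJetDefectAt (n : ℕ) (u v : 𝕜 → A) (d : A) (x : 𝕜) : Prop where
  contDiff_left : ContDiff 𝕜 n u
  contDiff_right : ContDiff 𝕜 n v
  iteratedDeriv_sub_of_lt : ∀ j < n, iteratedDeriv j (u - v) x = 0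
  iteratedDeriv_sub : iteratedDeriv n (u - v) x = d

namespace HasJetDefectAt

variable {u v u' v' : 𝕜 → A} {d d' : A}

theorem iteratedDeriv_sub_eq_zero (h : HasJetDefectAt n u v 0 x) :
    ∀ j ≤ n, iteratedDeriv j (u - v) x = 0 := fun j hj =>
  hj.lt_or_eq.elim (h.iteratedDeriv_sub_of_lt j) fun hjn => hjn ▸ h.iteratedDeriv_sub

theorem apply_eq (h : HasJetDefectAt n u v d x) (hn : 0 < n) : u x = v x := by
  simpa [sub_eq_zero] using h.iteratedDeriv_sub_of_lt 0 hn

theorem mul (h : HasJetDefectAt n u v d x) (h' : HasJetDefectAt n u' v' d' x) :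
    HasJetDefectAt n (u * u') (v * v') (d * u' x + v x * d') x where
  contDiff_left := h.contDiff_left.mul h'.contDiff_left
  contDiff_right := h.contDiff_right.mul h'.contDiff_right
  iteratedDeriv_sub_of_lt j hj := by
    have hle : (j : WithTop ℕ∞) ≤ n := by exact_mod_cast hj.le
    rw [iteratedDeriv_mul_sub_mul (h.contDiff_left.of_le hle).contDiffAt
      (h.contDiff_right.of_le hle).contDiffAt (h'.contDiff_left.of_le hle).contDiffAt
      (h'.contDiff_right.of_le hle).contDiffAt
      (fun i hi => h.iteratedDeriv_sub_of_lt i (hi.trans hj))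
      (fun i hi => h'.iteratedDeriv_sub_of_lt i (hi.trans hj)),
      h.iteratedDeriv_sub_of_lt j hj, h'.iteratedDeriv_sub_of_lt j hj, zero_mul, mul_zero,
      add_zero]
  iteratedDeriv_sub := by
    rw [iteratedDeriv_mul_sub_mul h.contDiff_left.contDiffAt h.contDiff_right.contDiffAt
      h'.contDiff_left.contDiffAt h'.contDiff_right.contDiffAt h.iteratedDeriv_sub_of_lt
      h'.iteratedDeriv_sub_of_lt, h.iteratedDeriv_sub, h'.iteratedDeriv_sub]

theorem mul_of_apply_eq_one (h : HasJetDefectAt n u v d x) (h' : HasJetDefectAt n u' v' d' x)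
    (hn : 0 < n) (hv : v x = 1) (hv' : v' x = 1) :
    HasJetDefectAt n (u * u') (v * v') (d + d') x := by
  simpa [h'.apply_eq hn, hv, hv'] using h.mul h'

theorem pow (h : HasJetDefectAt n u v d x) (hn : 0 < n) (hv : v x = 1) :
    ∀ k : ℕ, HasJetDefectAt n (u ^ k) (v ^ k) (k • d) x
  | 0 => by simpa using ⟨contDiff_const, contDiff_const, by simp, by simp⟩
  | k + 1 => by
    simpa only [pow_succ, succ_nsmul] using
      (h.pow hn hv k).mul_of_apply_eq_one h hn (by simp [hv]) hv

theorem comp_const_mul (c : 𝕜) (h : HasJetDefectAt n u v d (c * x)) :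
    HasJetDefectAt n (fun y => u (c * y)) (fun y => v (c * y)) (c ^ n • d) x := by
  have hscale : ∀ j ≤ n, iteratedDeriv j ((fun y => u (c * y)) - fun y => v (c * y)) x =
      c ^ j • iteratedDeriv j (u - v) (c * x) := fun j hj =>
    congrFun (iteratedDeriv_comp_const_smul
      ((h.contDiff_left.sub h.contDiff_right).of_le (by exact_mod_cast hj)) c) x
  refine ⟨h.contDiff_left.comp (contDiff_const.mul contDiff_id),
    h.contDiff_right.comp (contDiff_const.mul contDiff_id), fun j hj => ?_, ?_⟩
  · rw [hscale j hj.le, h.iteratedDeriv_sub_of_lt j hj, smul_zero]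
  · rw [hscale n le_rfl, h.iteratedDeriv_sub]

end HasJetDefectAt

/-- With `u = σ^{(2m)}` this is the paper's `σ^{(2m+1)}`. -/
def suzukiComp (ℓ : ℕ) (s t : 𝕜) (u : 𝕜 → A) : 𝕜 → A :=
  fun μ => u (s * μ) ^ ℓ * u (t * μ) * u (s * μ) ^ ℓ

theorem HasJetDefectAt.suzukiComp {u v : 𝕜 → A} {d : A} (h : HasJetDefectAt n u v d 0)
    (hn : 0 < n) (hv : v 0 = 1) (ℓ : ℕ) (s t : 𝕜) :
    HasJetDefectAt n (suzukiComp ℓ s t u) (suzukiComp ℓ s t v) ((2 * ℓ * s ^ n + t ^ n) • d) 0 := by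
  have hscaled (c : 𝕜) := (show HasJetDefectAt n u v d (c * 0) by rwa [mul_zero]).comp_const_mul c
  have hpow := (hscaled s).pow hn (by simpa using hv) ℓ
  rw [show (2 * ℓ * s ^ n + t ^ n) • d = ℓ • s ^ n • d + t ^ n • d + ℓ • s ^ n • d by
    simp only [add_smul, mul_smul, two_mul, Nat.cast_smul_eq_nsmul]; abel]
  exact (hpow.mul_of_apply_eq_one (hscaled t) hn (by simp [hv]) (by simpa using hv))
    |>.mul_of_apply_eq_one hpow hn (by simp [hv]) (by simp [hv])

end Jets

section Exponential

variable {A : Type*} [NormedRing A] [NormedAlgebra ℝ A] [CompleteSpace A]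

theorem contDiff_exp_smul (a : A) {n : WithTop ℕ∞} : ContDiff ℝ n fun t : ℝ => exp (t • a) :=
  (contDiff_iff_contDiffAt.2 fun b => (exp_analytic (𝕂 := ℝ) b).contDiffAt).comp
    (contDiff_id.smul contDiff_const)

theorem exp_add_smul (a : A) (s t : ℝ) : exp ((s + t) • a) = exp (s • a) * exp (t • a) := by
  let +nondep : NormedAlgebra ℚ A := NormedAlgebra.restrictScalars ℚ ℝ A
  rw [add_smul, exp_add_of_commute (((Commute.refl a).smul_left s).smul_right t)]

theorem exp_smul_pow (a : A) (s : ℝ) (k : ℕ) : exp (s • a) ^ k = exp ((k * s) • a) := by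
  induction k with
  | zero => simp
  | succ k ih => rw [pow_succ, ih, ← exp_add_smul]; push_cast; ring_nf

theorem suzukiComp_exp_smul (a : A) {ℓ : ℕ} {s t : ℝ} (h : 2 * ℓ * s + t = 1) :
    suzukiComp ℓ s t (fun μ => exp (μ • a)) = fun μ => exp (μ • a) := by
  funext μ
  rw [suzukiComp, exp_smul_pow, ← exp_add_smul, ← exp_add_smul]
  congr 2
  linear_combination μ * h

end Exponential

theorem suzukiS_order_condition {r m : ℕ} (hr : 2 < r) (hm : 0 < m) :
    ((r : ℝ) - 1) * suzukiS r m ^ (2 * m + 1) +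
      (1 - ((r : ℝ) - 1) * suzukiS r m) ^ (2 * m + 1) = 0 := by
  set b : ℝ := r - 1
  set y : ℝ := b ^ ((1 : ℝ) / (2 * m + 1))
  have hb : 1 < b := by
    have : (2 : ℝ) < r := by exact_mod_cast hr
    linarith
  have hyb : y < b := by
    have hexp : (1 : ℝ) / (2 * m + 1) < 1 := by
      rw [div_lt_one (by positivity)]
      have : (1 : ℝ) ≤ m := by exact_mod_cast hm
      linarith
    simpa only [Real.rpow_one] using Real.rpow_lt_rpow_of_exponent_lt hb hexp
  have hypow : y ^ (2 * m + 1) = b := by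
    rw [← Real.rpow_natCast, ← Real.rpow_mul (by linarith), Nat.cast_add_one, Nat.cast_mul,
      Nat.cast_ofNat, one_div_mul_cancel (by positivity), Real.rpow_one]
  have hs : suzukiS r m = 1 / (b - y) := rfl
  have ht : 1 - b * (1 / (b - y)) = -(y / (b - y)) := by
    field_simp [(sub_pos.2 hyb).ne']
    ring
  rw [hs, ht, (odd_two_mul_add_one m).neg_pow, div_pow, div_pow, hypow, one_pow]
  field_simp [pow_ne_zero _ (sub_pos.2 hyb).ne']
  ring

theorem suzuki_induction_step_general {A : Type*} [NormedRing A] [NormedAlgebra ℝ A]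
    [CompleteSpace A] (a : A) (m ℓ : ℕ) (hm : 1 ≤ m) (hℓ : 1 ≤ ℓ)
    (f : ℝ → A) (hf : ContDiff ℝ (2 * m + 1 : ℕ) f)
    (hlow : ∀ j : ℕ, j ≤ 2 * m →
      iteratedDeriv j (fun μ : ℝ => f μ - NormedSpace.exp (μ • a)) 0 = 0) :
    ∀ j : ℕ, j ≤ 2 * m + 1 →
      iteratedDeriv j
        (fun μ : ℝ =>
          f (suzukiS (2 * ℓ + 1) m * μ) ^ ℓ *
            f ((1 - (((2 * ℓ + 1 : ℕ) : ℝ) - 1) * suzukiS (2 * ℓ + 1) m) * μ) *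
            f (suzukiS (2 * ℓ + 1) m * μ) ^ ℓ -
          NormedSpace.exp (μ • a)) 0 = 0 := by
  have hr : ((2 * ℓ + 1 : ℕ) : ℝ) - 1 = 2 * ℓ := by push_cast; ring
  set s := suzukiS (2 * ℓ + 1) m
  have hjet : HasJetDefectAt (2 * m + 1) f (fun μ => exp (μ • a))
      (iteratedDeriv (2 * m + 1) (f - fun μ => exp (μ • a)) 0) 0 :=
    ⟨hf, contDiff_exp_smul a, fun j hj => hlow j (by omega), rfl⟩
  have hcomp := hjet.suzukiComp (Nat.succ_pos _) (by simp) ℓ s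
    (1 - (((2 * ℓ + 1 : ℕ) : ℝ) - 1) * s)
  rw [suzukiComp_exp_smul a (by rw [hr]; ring), ← hr, suzukiS_order_condition (by omega) hm,
    zero_smul] at hcomp
  exact hcomp.iteratedDeriv_sub_eq_zero

/-- Suzuki induction step (from the proof of Theorem 4.2), in a complete normed unital
algebra: if `f` is `(2m+1)`-times continuously differentiable, `f 0 = 1`, and
`μ ↦ f μ - exp (μ a)` has vanishing derivatives at `0` up to order `2m`, then with
`r = 2ℓ+1`, `s = s_m` and `s̃ = 1 - (r-1) s`, the Suzuki composition
`g(μ) = f(sμ)^ℓ · f(s̃μ) · f(sμ)^ℓ` satisfies: `μ ↦ g μ - exp (μ a)` has vanishing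
derivatives at `0` up to order `2m+1`. -/
theorem suzuki_induction_step {A : Type*} [NormedRing A] [NormedAlgebra ℝ A]
    [CompleteSpace A] (a : A) (m ℓ : ℕ) (hm : 1 ≤ m) (hℓ : 1 ≤ ℓ)
    (f : ℝ → A) (hf : ContDiff ℝ (2 * m + 1 : ℕ) f) (hf0 : f 0 = 1)
    (hlow : ∀ j : ℕ, j ≤ 2 * m →
      iteratedDeriv j (fun μ : ℝ => f μ - NormedSpace.exp (μ • a)) 0 = 0) :
    ∀ j : ℕ, j ≤ 2 * m + 1 →
      iteratedDeriv j
        (fun μ : ℝ =>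
          f (suzukiS (2 * ℓ + 1) m * μ) ^ ℓ *
            f ((1 - (((2 * ℓ + 1 : ℕ) : ℝ) - 1) * suzukiS (2 * ℓ + 1) m) * μ) *
            f (suzukiS (2 * ℓ + 1) m * μ) ^ ℓ -
          NormedSpace.exp (μ • a)) 0 = 0 :=
  suzuki_induction_step_general a m ℓ hm hℓ f hf hlow
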